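/- arXiv:2601.01824 — 3 statements merged into one kernel-verified Lean document; each statement's English description precedes it below -/
import Mathlib

section
/- Let j ≥ 2 and f = x^j y^j + y^j z^j + x^j z^j, defining a curve C_j in the complex projective plane. The only singular points of C_j are (0:0:1), (0:1:0), (1:0:0), and the total Tjurina number of C_j equals 3(j-1)^2. -/
/-!
Each partial derivative of `f` is `∂f/∂xᵢ = j xᵢ^(j-1) (∑ₖ xₖ^j - xᵢ^j)`, so at a singular point
the numbers `pᵢ = xᵢ^j` satisfy `pᵢ (pₖ + pₗ) = 0` for `{i, k, l} = {0, 1, 2}`; adding and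
subtracting these three relations shows that all products `pᵢ pₖ` vanish, so two coordinates
are zero. In each of the three standard charts the curve has the local equation
`x^j y^j + x^j + y^j`, whose Tjurina ideal is the monomial ideal `(x^(j-1), y^(j-1))`. The
monomials outside a monomial ideal form a basis of the quotient, so every chart contributes
`(j-1)^2`.
-/

open MvPolynomial

namespace MvPolynomial

variable {σ K : Type*} [Field K]

theorem restrictScalars_span_X_pow (a : σ → ℕ) :
    (Ideal.span (Set.range fun i => (X i : MvPolynomial σ K) ^ a i)).restrictScalars K =
      restrictSupport K {m | ∃ i, a i ≤ m i} := by
  have hrange : Set.range (fun i => (X i : MvPolynomial σ K) ^ a i) =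
      (monomial · 1) '' Set.range fun i => Finsupp.single i (a i) := by
    rw [← Set.range_comp]
    simp only [Function.comp_def, X_pow_eq_monomial]
  ext p
  simp only [Submodule.restrictScalars_mem, hrange, mem_ideal_span_monomial_image,
    mem_restrictSupport_iff, Set.exists_range_iff, Finsupp.single_le_iff]
  rfl

theorem finrank_quotient_span_X_pow [Fintype σ] (a : σ → ℕ) :
    Module.finrank K
      (MvPolynomial σ K ⧸ Ideal.span (Set.range fun i => (X i : MvPolynomial σ K) ^ a i)) =
      ∏ i, a i := by
  set s : Set (σ →₀ ℕ) := {m | ∃ i, a i ≤ m i}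
  have hcompl : IsCompl (restrictSupport K s) (restrictSupport K sᶜ) := by
    refine ⟨Submodule.disjoint_def.2 fun p hs hsc => ?_, codisjoint_iff.2 ?_⟩
    · rw [mem_restrictSupport_iff] at hs hsc
      exact support_eq_empty.1
        (Finset.coe_eq_empty.1 (Set.subset_empty_iff.1 fun m hm => hsc hm (hs hm)))
    · rw [restrictSupport_eq_span, restrictSupport_eq_span, ← Submodule.span_union,
        ← Set.image_union, Set.union_compl_self, ← restrictSupport_eq_span, restrictSupport_univ]
  have hs : ↥sᶜ ≃ ∀ i, Fin (a i) :=
    (Equiv.subtypeEquiv Finsupp.equivFunOnFinite fun m => by simp [s]).trans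
      (Equiv.subtypePiEquivPi.trans (Equiv.piCongrRight fun i => Fin.equivSubtype.symm))
  calc Module.finrank K
        (MvPolynomial σ K ⧸ Ideal.span (Set.range fun i => (X i : MvPolynomial σ K) ^ a i))
      = Module.finrank K (MvPolynomial σ K ⧸ restrictSupport K s) := by
        rw [← restrictScalars_span_X_pow]
        exact (Submodule.Quotient.restrictScalarsEquiv K _).finrank_eq.symm
    _ = Module.finrank K (restrictSupport K sᶜ) :=
        (Submodule.quotientEquivOfIsCompl _ _ hcompl).finrank_eq
    _ = Nat.card ↥sᶜ := Module.finrank_eq_nat_card_basis (basisRestrictSupport K sᶜ)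
    _ = ∏ i, a i := by simp [Nat.card_congr hs, Nat.card_pi]

theorem finrank_quotient_span_X_pow_pair (a b : ℕ) :
    Module.finrank K
      (MvPolynomial (Fin 2) K ⧸ Ideal.span {(X 0 : MvPolynomial (Fin 2) K) ^ a, X 1 ^ b}) =
      a * b := by
  have hpair : ({X 0 ^ a, X 1 ^ b} : Set (MvPolynomial (Fin 2) K)) =
      Set.range fun i => X i ^ ![a, b] i := by
    ext
    simp [Fin.exists_fin_two, eq_comm]
  rw [hpair, finrank_quotient_span_X_pow, Fin.prod_univ_two]
  rfl

end MvPolynomial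

theorem two_eq_zero_of_mul_add_eq_zero {R : Type*} [CommRing R] [NoZeroDivisors R]
    (h2 : (2 : R) ≠ 0) {p q r : R}
    (hp : p * (q + r) = 0) (hq : q * (p + r) = 0) (hr : r * (p + q) = 0) :
    (p = 0 ∧ q = 0) ∨ (p = 0 ∧ r = 0) ∨ (q = 0 ∧ r = 0) := by
  have hpq : p * q = 0 := (mul_eq_zero.1 (by linear_combination hp + hq - hr)).resolve_left h2
  have hpr : p * r = 0 := (mul_eq_zero.1 (by linear_combination hp + hr - hq)).resolve_left h2
  have hqr : q * r = 0 := (mul_eq_zero.1 (by linear_combination hq + hr - hp)).resolve_left h2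
  by_cases hp0 : p = 0
  · rcases mul_eq_zero.1 hqr with hq0 | hr0
    · exact Or.inl ⟨hp0, hq0⟩
    · exact Or.inr (Or.inl ⟨hp0, hr0⟩)
  · exact Or.inr (Or.inr
      ⟨(mul_eq_zero.1 hpq).resolve_left hp0, (mul_eq_zero.1 hpr).resolve_left hp0⟩)

noncomputable section

variable {K : Type*}

def curvePoly (K : Type*) [CommSemiring K] (j : ℕ) : MvPolynomial (Fin 3) K :=
  X 0 ^ j * X 1 ^ j + X 1 ^ j * X 2 ^ j + X 0 ^ j * X 2 ^ j

def localEquation (K : Type*) [CommSemiring K] (j : ℕ) : MvPolynomial (Fin 2) K :=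
  X 0 ^ j * X 1 ^ j + X 0 ^ j + X 1 ^ j

def tjurinaIdeal [CommRing K] (g : MvPolynomial (Fin 2) K) : Ideal (MvPolynomial (Fin 2) K) :=
  Ideal.span {g, pderiv 0 g, pderiv 1 g}

theorem add_mul_pderiv_mem_tjurinaIdeal [CommRing K] (g a b c : MvPolynomial (Fin 2) K) :
    a * g + b * pderiv 0 g + c * pderiv 1 g ∈ tjurinaIdeal g := by
  refine add_mem (add_mem ?_ ?_) ?_ <;> refine Ideal.mul_mem_left _ _ (Ideal.subset_span ?_) <;>
    simp

theorem aeval_curvePoly_chart_two [CommRing K] (j : ℕ) :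
    aeval ![X 0, X 1, 1] (curvePoly K j) = localEquation K j := by
  simp [curvePoly, localEquation]
  ring

theorem aeval_curvePoly_chart_one [CommRing K] (j : ℕ) :
    aeval ![X 0, 1, X 1] (curvePoly K j) = localEquation K j := by
  simp [curvePoly, localEquation]
  ring

theorem aeval_curvePoly_chart_zero [CommRing K] (j : ℕ) :
    aeval ![1, X 0, X 1] (curvePoly K j) = localEquation K j := by
  simp [curvePoly, localEquation]
  ring

theorem pderiv_curvePoly [CommRing K] (j : ℕ) (i : Fin 3) :
    pderiv i (curvePoly K j) = C (j : K) * X i ^ (j - 1) * (∑ k, X k ^ j - X i ^ j) := by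
  rw [map_natCast]
  fin_cases i <;> simp [curvePoly, Fin.sum_univ_three] <;> ring

theorem pderiv_localEquation_zero [CommRing K] (j : ℕ) :
    pderiv 0 (localEquation K j) = C (j : K) * X 0 ^ (j - 1) * (X 1 ^ j + 1) := by
  rw [map_natCast]
  simp [localEquation]
  ring

theorem pderiv_localEquation_one [CommRing K] (j : ℕ) :
    pderiv 1 (localEquation K j) = C (j : K) * X 1 ^ (j - 1) * (X 0 ^ j + 1) := by
  rw [map_natCast]
  simp [localEquation]
  ring

theorem tjurinaIdeal_localEquation [Field K] {j : ℕ} (hj : (j : K) ≠ 0) :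
    tjurinaIdeal (localEquation K j) = Ideal.span {X 0 ^ (j - 1), X 1 ^ (j - 1)} := by
  have hunit : C (j : K)⁻¹ * C (j : K) = (1 : MvPolynomial (Fin 2) K) := by
    rw [← C_mul, inv_mul_cancel₀ hj, C_1]
  have h0 := pderiv_localEquation_zero (K := K) j
  have h1 := pderiv_localEquation_one (K := K) j
  obtain ⟨n, rfl⟩ : ∃ n, j = n + 1 := Nat.exists_eq_succ_of_ne_zero (by rintro rfl; simp at hj)
  simp only [Nat.add_sub_cancel] at h0 h1 ⊢
  apply le_antisymm
  · rw [tjurinaIdeal, Ideal.span_le, Set.insert_subset_iff, Set.insert_subset_iff,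
      Set.singleton_subset_iff]
    refine ⟨Ideal.mem_span_pair.2 ⟨X 0 * X 1 ^ (n + 1) + X 0, X 1, ?_⟩,
      Ideal.mem_span_pair.2 ⟨C ((n + 1 : ℕ) : K) * (X 1 ^ (n + 1) + 1), 0, ?_⟩,
      Ideal.mem_span_pair.2 ⟨0, C ((n + 1 : ℕ) : K) * (X 0 ^ (n + 1) + 1), ?_⟩⟩
    · rw [localEquation]; ring
    · rw [h0]; ring
    · rw [h1]; ring
  · rw [Ideal.span_le, Set.insert_subset_iff, Set.singleton_subset_iff]
    constructor <;> rw [SetLike.mem_coe]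
    · convert add_mul_pderiv_mem_tjurinaIdeal (localEquation K (n + 1))
        (-X 0 ^ n) ((1 + X 0 ^ (n + 1)) * C ((n + 1 : ℕ) : K)⁻¹) 0 using 1
      rw [h0, localEquation]
      linear_combination -(X 0 ^ n * (X 1 ^ (n + 1) + 1) * (1 + X 0 ^ (n + 1))) * hunit
    · convert add_mul_pderiv_mem_tjurinaIdeal (localEquation K (n + 1))
        (-X 1 ^ n) 0 ((1 + X 1 ^ (n + 1)) * C ((n + 1 : ℕ) : K)⁻¹) using 1
      rw [h1, localEquation]
      linear_combination -(X 1 ^ n * (X 0 ^ (n + 1) + 1) * (1 + X 1 ^ (n + 1))) * hunit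

theorem pow_mul_sum_sub_eq_zero_of_eval_pderiv_curvePoly [Field K] {j : ℕ} (hj : (j : K) ≠ 0)
    {v : Fin 3 → K} {i : Fin 3} (h : eval v (pderiv i (curvePoly K j)) = 0) :
    v i ^ j * (∑ k, v k ^ j - v i ^ j) = 0 := by
  rw [pderiv_curvePoly] at h
  simp only [eval_mul, eval_C, eval_pow, eval_X, eval_sub, map_sum] at h
  have hj₀ : j ≠ 0 := by rintro rfl; simp at hj
  have hj' : (j : K) * (v i ^ j * (∑ k, v k ^ j - v i ^ j)) = 0 := by
    generalize ∑ k, v k ^ j - v i ^ j = S at h ⊢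
    linear_combination v i * h - (j * S) * pow_sub_one_mul hj₀ (v i)
  exact (mul_eq_zero.1 hj').resolve_left hj

theorem eval_pderiv_curvePoly_eq_zero_iff [Field K] [CharZero K] {j : ℕ} (hj : 2 ≤ j)
    (v : Fin 3 → K) :
    (∀ i, eval v (pderiv i (curvePoly K j)) = 0) ↔
      ∃ t : K, v = t • ![0, 0, 1] ∨ v = t • ![0, 1, 0] ∨ v = t • ![1, 0, 0] := by
  constructor
  · intro h
    have hv i := pow_mul_sum_sub_eq_zero_of_eval_pderiv_curvePoly
      (Nat.cast_ne_zero.2 (by omega)) (h i)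
    have h0 := hv 0
    have h1 := hv 1
    have h2 := hv 2
    simp only [Fin.sum_univ_three] at h0 h1 h2
    have hz (i : Fin 3) : v i ^ j = 0 → v i = 0 := eq_zero_of_pow_eq_zero
    rcases two_eq_zero_of_mul_add_eq_zero (p := v 0 ^ j) (q := v 1 ^ j) (r := v 2 ^ j)
      two_ne_zero (by linear_combination h0) (by linear_combination h1)
      (by linear_combination h2) with ⟨e0, e1⟩ | ⟨e0, e2⟩ | ⟨e1, e2⟩
    · exact ⟨v 2, Or.inl (by ext i; fin_cases i <;> simp [hz _ e0, hz _ e1])⟩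
    · exact ⟨v 1, Or.inr (Or.inl (by ext i; fin_cases i <;> simp [hz _ e0, hz _ e2]))⟩
    · exact ⟨v 0, Or.inr (Or.inr (by ext i; fin_cases i <;> simp [hz _ e1, hz _ e2]))⟩
  · rintro ⟨t, rfl | rfl | rfl⟩ i <;> fin_cases i <;>
      simp [pderiv_curvePoly, Fin.sum_univ_three, zero_pow (by omega : j - 1 ≠ 0),
        zero_pow (by omega : j ≠ 0)]

end

/-- For `j ≥ 2`, the curve `C_j : x^j y^j + y^j z^j + x^j z^j = 0` in `ℙ²(ℂ)` has exactly
the three coordinate points as singular points, and its total Tjurina number is `3(j-1)^2`,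
computed as the sum of the local Tjurina numbers in the three affine charts. -/
theorem stmt3 (j : ℕ) (hj : 2 ≤ j)
    (f : MvPolynomial (Fin 3) ℂ)
    (hf : f = X 0 ^ j * X 1 ^ j + X 1 ^ j * X 2 ^ j + X 0 ^ j * X 2 ^ j)
    -- local (dehomogenized) equations in the charts z = 1, y = 1, x = 1
    (g₁ g₂ g₃ : MvPolynomial (Fin 2) ℂ)
    (hg₁ : g₁ = aeval ![X 0, X 1, 1] f)
    (hg₂ : g₂ = aeval ![X 0, 1, X 1] f)
    (hg₃ : g₃ = aeval ![1, X 0, X 1] f) :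
    -- the singular points are exactly (0:0:1), (0:1:0) and (1:0:0)
    ({v : Fin 3 → ℂ | v ≠ 0 ∧ ∀ i : Fin 3, eval v (pderiv i f) = 0} =
      {v : Fin 3 → ℂ | v ≠ 0 ∧ ∃ t : ℂ,
        v = t • ![0, 0, 1] ∨ v = t • ![0, 1, 0] ∨ v = t • ![1, 0, 0]}) ∧
    -- the total Tjurina number equals 3(j-1)^2
    Module.finrank ℂ (MvPolynomial (Fin 2) ℂ ⧸
        Ideal.span {g₁, pderiv 0 g₁, pderiv 1 g₁}) +
      Module.finrank ℂ (MvPolynomial (Fin 2) ℂ ⧸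
        Ideal.span {g₂, pderiv 0 g₂, pderiv 1 g₂}) +
      Module.finrank ℂ (MvPolynomial (Fin 2) ℂ ⧸
        Ideal.span {g₃, pderiv 0 g₃, pderiv 1 g₃})
      = 3 * (j - 1) ^ 2 := by
  obtain rfl : f = curvePoly ℂ j := hf
  subst hg₁ hg₂ hg₃
  refine ⟨Set.ext fun v => and_congr_right fun _ => eval_pderiv_curvePoly_eq_zero_iff hj v, ?_⟩
  rw [aeval_curvePoly_chart_two, aeval_curvePoly_chart_one, aeval_curvePoly_chart_zero,
    ← tjurinaIdeal.eq_1, tjurinaIdeal_localEquation (Nat.cast_ne_zero.2 (by omega)),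
    finrank_quotient_span_X_pow_pair]
  ring
end

section
/- Let f = x^5 + y^5 + y z (x^3 + y^2 z) ∈ C[x,y,z]. Then the curve C: f = 0 in P^2(C) is irreducible. -/
/-!
Over `R = ℂ[x, y]`, `f = y³z² + x³y·z + (x⁵ + y⁵)` is a quadratic in `z` whose outer coefficients
are coprime, so by Gauss's lemma it can only factor if it has a root in `Frac R`. Multiplying such a
root by `y³` gives, since `R` is integrally closed, some `w ∈ R` with
`w² + x³y·w + y³(x⁵ + y⁵) = 0`. Then `y ∣ w`; writing `w = y u`, cancelling `y²` and setting `y = 1`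
leaves `r ∈ ℂ[x]` with `r² + x³r + x⁵ + 1 = 0`. Since `r (r + x³) = -(x⁵ + 1)`, one of `r` and
`-(r + x³)` (both roots) has degree at most `2`, and comparing coefficients then forces `5 = 0`.
-/

namespace Polynomial

variable {R : Type*} [CommRing R]

theorem isPrimitive_quadratic_of_isRelPrime {a b c : R} (h : IsRelPrime a c) :
    (C a * X ^ 2 + C b * X + C c).IsPrimitive := by
  intro r hr
  rw [C_dvd_iff_dvd_coeff] at hr
  exact h (by simpa using hr 2) (by simpa using hr 0)

theorem irreducible_quadratic_of_forall_sq_add_mul_add_mul_ne_zero [IsDomain R]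
    [IsIntegrallyClosed R] {a b c : R} (ha : a ≠ 0)
    (hprim : (C a * X ^ 2 + C b * X + C c).IsPrimitive)
    (hroot : ∀ w : R, w ^ 2 + b * w + a * c ≠ 0) :
    Irreducible (C a * X ^ 2 + C b * X + C c) := by
  let K := FractionRing R
  have hinj : Function.Injective (algebraMap R K) := IsFractionRing.injective R K
  refine hprim.irreducible_of_irreducible_map_of_injective hinj ?_
  have ha' : algebraMap R K a ≠ 0 := (map_ne_zero_iff _ hinj).mpr ha
  simp only [Polynomial.map_add, Polynomial.map_mul, map_C, Polynomial.map_pow, map_X]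
  refine irreducible_of_degree_le_three_of_not_isRoot
    (by rw [natDegree_quadratic ha']; decide) fun z hz => ?_
  replace hz : algebraMap R K a * z ^ 2 + algebraMap R K b * z + algebraMap R K c = 0 := by
    simpa using hz
  -- `a z` is a root of the monic `T² + bT + ac`
  have hint : IsIntegral R (algebraMap R K a * z) := by
    refine ⟨X ^ 2 + C b * X + C (a * c), ?_, ?_⟩
    · monicity!
    · simp only [eval₂_add, eval₂_mul, eval₂_pow, eval₂_X, eval₂_C, map_mul]
      linear_combination algebraMap R K a * hz
  obtain ⟨w, hw⟩ := IsIntegrallyClosed.isIntegral_iff.mp hint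
  refine hroot w (hinj ?_)
  simp only [map_add, map_mul, map_pow, map_zero, hw]
  linear_combination algebraMap R K a * hz

theorem sq_add_X_pow_three_mul_add_X_pow_five_add_one_ne_zero_of_natDegree_le_two
    (h5 : (5 : R) ≠ 0) {r : R[X]} (hr : r.natDegree ≤ 2) :
    r ^ 2 + X ^ 3 * r + X ^ 5 + 1 ≠ 0 := by
  intro h
  rw [as_sum_range_C_mul_X_pow' r (n := 3) (by omega)] at h
  simp only [Finset.sum_range_succ, Finset.sum_range_zero, zero_add, pow_zero, mul_one, pow_one] at h
  set a := r.coeff 2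
  set b := r.coeff 1
  set c := r.coeff 0
  have h' : C (a + 1) * X ^ 5 + C (a ^ 2 + b) * X ^ 4 + C (2 * a * b + c) * X ^ 3
      + C (b ^ 2 + 2 * a * c) * X ^ 2 + C (2 * b * c) * X + C (c ^ 2 + 1) = 0 := by
    simp only [map_add, map_mul, map_pow, map_ofNat, map_one]
    linear_combination h
  have e5 := congrArg (coeff · 5) h'
  have e4 := congrArg (coeff · 4) h'
  have e3 := congrArg (coeff · 3) h'
  have e2 := congrArg (coeff · 2) h'
  simp only [coeff_add, coeff_C_mul_X_pow, coeff_C_mul_X, coeff_C] at e5 e4 e3 e2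
  norm_num at e5 e4 e3 e2
  have ha : a = -1 := by linear_combination e5
  have hb : b = -1 := by rw [ha] at e4; linear_combination e4
  have hc : c = -2 := by rw [ha, hb] at e3; linear_combination e3
  exact h5 (by rw [ha, hb, hc] at e2; linear_combination e2)

theorem sq_add_X_pow_three_mul_add_X_pow_five_add_one_ne_zero [IsDomain R]
    (h5 : (5 : R) ≠ 0) (r : R[X]) : r ^ 2 + X ^ 3 * r + X ^ 5 + 1 ≠ 0 := by
  intro h
  have hprod : r * (r + X ^ 3) = -(X ^ 5 + 1) := by linear_combination h
  have hne : (X ^ 5 + 1 : R[X]) ≠ 0 := (monic_X_pow_add_C 1 (by norm_num)).ne_zero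
  have hr : r ≠ 0 := by
    rintro rfl; rw [zero_mul] at hprod; exact hne (neg_eq_zero.mp hprod.symm)
  have hr' : r + X ^ 3 ≠ 0 := by
    intro h0; rw [h0, mul_zero] at hprod; exact hne (neg_eq_zero.mp hprod.symm)
  have hsum : r.natDegree + (r + X ^ 3).natDegree = 5 := by
    rw [← natDegree_mul hr hr', hprod, natDegree_neg]
    compute_degree!
  have hle₁ : (r + X ^ 3).natDegree ≤ max r.natDegree 3 := by
    have := natDegree_add_le r (X ^ 3)
    rwa [natDegree_X_pow] at this
  have hle₂ : r.natDegree ≤ max (r + X ^ 3).natDegree 3 := by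
    have := natDegree_sub_le (r + X ^ 3) (X ^ 3)
    rwa [add_sub_cancel_right, natDegree_X_pow] at this
  rcases le_or_gt r.natDegree 2 with hr2 | hr2
  · exact sq_add_X_pow_three_mul_add_X_pow_five_add_one_ne_zero_of_natDegree_le_two h5 hr2 h
  · refine sq_add_X_pow_three_mul_add_X_pow_five_add_one_ne_zero_of_natDegree_le_two h5
      (r := -(r + X ^ 3)) ?_ (by linear_combination h)
    rw [natDegree_neg]
    omega

end Polynomial

open MvPolynomial

section TwoVariables

variable {k : Type*} [Field k]

theorem isRelPrime_X_one_pow_three_X_zero_pow_five_add_X_one_pow_five :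
    IsRelPrime (X 1 ^ 3 : MvPolynomial (Fin 2) k) (X 0 ^ 5 + X 1 ^ 5) := by
  refine IsRelPrime.pow_left (X_prime.irreducible.isRelPrime_iff_not_dvd.mpr fun h => ?_)
  have hx : (X 1 : MvPolynomial (Fin 2) k) ∣ X 0 ^ 5 :=
    (dvd_add_left (dvd_pow_self _ (by norm_num))).mp h
  exact absurd (X_dvd_X.mp (X_prime.dvd_of_dvd_pow hx)) (by decide)

theorem sq_add_X_zero_pow_three_mul_X_one_mul_add_ne_zero (h5 : (5 : k) ≠ 0)
    (w : MvPolynomial (Fin 2) k) :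
    w ^ 2 + X 0 ^ 3 * X 1 * w + X 1 ^ 3 * (X 0 ^ 5 + X 1 ^ 5) ≠ 0 := by
  intro hw
  obtain ⟨u, rfl⟩ : (X 1 : MvPolynomial (Fin 2) k) ∣ w :=
    X_prime.dvd_of_dvd_pow (n := 2)
      ⟨-(X 0 ^ 3 * w + X 1 ^ 2 * (X 0 ^ 5 + X 1 ^ 5)), by linear_combination hw⟩
  have hu : u ^ 2 + X 0 ^ 3 * u + X 0 ^ 5 * X 1 + X 1 ^ 6 = 0 :=
    mul_left_cancel₀ (pow_ne_zero 2 (X_ne_zero 1)) (by linear_combination hw)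
  refine Polynomial.sq_add_X_pow_three_mul_add_X_pow_five_add_one_ne_zero h5
    (aeval ![Polynomial.X, 1] u) ?_
  simpa using congrArg (aeval ![Polynomial.X, (1 : Polynomial k)]) hu

end TwoVariables

/-- The quintic `f = x⁵ + y⁵ + yz(x³ + y²z)` is an irreducible polynomial, i.e. the
curve `C : f = 0` in `ℙ²(ℂ)` is irreducible. -/
theorem stmt14 (f : MvPolynomial (Fin 3) ℂ)
    (hf : f = X 0 ^ 5 + X 1 ^ 5 + X 1 * X 2 * (X 0 ^ 3 + X 1 ^ 2 * X 2)) :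
    Irreducible f := by
  let e := (renameEquiv ℂ finSuccEquivLast).trans (optionEquivLeft ℂ (Fin 2))
  have he : e f = .C (X 1 ^ 3) * .X ^ 2 + .C (X 0 ^ 3 * X 1) * .X + .C (X 0 ^ 5 + X 1 ^ 5) := by
    subst hf
    have h0 : finSuccEquivLast (0 : Fin 3) = some 0 := rfl
    have h1 : finSuccEquivLast (1 : Fin 3) = some 1 := rfl
    have h2 : finSuccEquivLast (2 : Fin 3) = none := rfl
    simp only [e, AlgEquiv.trans_apply, map_add, map_mul, map_pow, renameEquiv_apply, rename_X,
      h0, h1, h2, optionEquivLeft_X_some, optionEquivLeft_X_none]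
    ring
  rw [← MulEquiv.irreducible_iff e, he]
  exact Polynomial.irreducible_quadratic_of_forall_sq_add_mul_add_mul_ne_zero
    (pow_ne_zero 3 (X_ne_zero 1))
    (Polynomial.isPrimitive_quadratic_of_isRelPrime
      isRelPrime_X_one_pow_three_X_zero_pow_five_add_X_one_pow_five)
    (sq_add_X_zero_pow_three_mul_X_one_mul_add_ne_zero (by norm_num))
end

section
/- Let j ≥ 3 and f = x^j y^j + y^j z^j + x^j z^j. The Jacobian ideal localization argument: any homogeneous polynomial h of degree 2j-3 such that, at each of the three points (0:0:1), (0:1:0), (1:0:0), the localization of h lies in the local ideal generated by the (j-1)-st powers of the two local coordinates, must be zero. Consequently I_{f,2j-3} = 0, where I_f is the saturation of the Jacobian ideal. -/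
/-!
Dehomogenizing a homogeneous `h` in any of the three charts keeps its coefficients, and if `s * p`
lies in the monomial ideal `(x^k, y^k)` with `s(0) ≠ 0`, then so does every monomial of `p`
(compare coefficients along increasing exponents, using the constant term of `s`). Hence, reading
off the three charts, every monomial `x^a y^b z^c` of `h` has at least two of `a, b, c` at least
`j - 1`, so its degree is at least `2j - 2 > 2j - 3`.
-/

open MvPolynomial

section

variable {R : Type*} [CommSemiring R]

theorem coeff_eq_zero_of_mem_span_X_pow_pair {k : ℕ} {p : MvPolynomial (Fin 2) R}
    (hp : p ∈ Ideal.span {(X 0 : MvPolynomial (Fin 2) R) ^ k, X 1 ^ k})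
    {n : Fin 2 →₀ ℕ} (h0 : n 0 < k) (h1 : n 1 < k) : coeff n p = 0 := by
  obtain ⟨a, b, rfl⟩ := Ideal.mem_span_pair.mp hp
  simp only [coeff_add, X_pow_eq_monomial, coeff_mul_monomial', Finsupp.single_le_iff]
  simp [h0.not_ge, h1.not_ge]

theorem coeff_eq_zero_of_mul_mem_span_X_pow_pair [NoZeroDivisors R] {k : ℕ}
    {s p : MvPolynomial (Fin 2) R} (hs : constantCoeff s ≠ 0)
    (hsp : s * p ∈ Ideal.span {(X 0 : MvPolynomial (Fin 2) R) ^ k, X 1 ^ k})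
    (n : Fin 2 →₀ ℕ) (h0 : n 0 < k) (h1 : n 1 < k) : coeff n p = 0 := by
  induction n using WellFoundedLT.induction with
  | ind n ih =>
    have hz := coeff_eq_zero_of_mem_span_X_pow_pair hsp h0 h1
    rw [coeff_mul, Finset.sum_eq_single (0, n)] at hz
    · exact (mul_eq_zero.mp hz).resolve_left hs
    · rintro ⟨u, v⟩ huv hne
      rw [Finset.HasAntidiagonal.mem_antidiagonal] at huv
      have hvn : v < n := by
        refine lt_of_le_of_ne (huv ▸ le_add_self) fun hvn => hne ?_
        subst hvn
        simpa using huv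
      have hle := fun i => Finsupp.le_def.mp hvn.le i
      rw [ih v hvn ((hle 0).trans_lt h0) ((hle 1).trans_lt h1), mul_zero]
    · simp

noncomputable def affineExponent (m : Fin 3 →₀ ℕ) : Fin 2 →₀ ℕ :=
  Finsupp.single 0 (m 0) + Finsupp.single 1 (m 1)

@[simp] theorem affineExponent_apply_zero (m : Fin 3 →₀ ℕ) : affineExponent m 0 = m 0 := by
  simp [affineExponent]

@[simp] theorem affineExponent_apply_one (m : Fin 3 →₀ ℕ) : affineExponent m 1 = m 1 := by
  simp [affineExponent]

theorem aeval_chart_monomial (m : Fin 3 →₀ ℕ) (c : R) :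
    aeval ![X 0, X 1, 1] (monomial m c : MvPolynomial (Fin 3) R) =
      monomial (affineExponent m) c := by
  rw [aeval_monomial, Finsupp.prod_pow, Fin.prod_univ_three]
  simp [affineExponent, X_pow_eq_monomial, monomial_mul, C_mul_monomial]

theorem coeff_aeval_chart_of_isHomogeneous {d : ℕ} {h : MvPolynomial (Fin 3) R}
    (hh : h.IsHomogeneous d) {m : Fin 3 →₀ ℕ} (hm : m.degree = d) :
    coeff (affineExponent m) (aeval ![X 0, X 1, 1] h) = coeff m h := by
  conv_lhs => rw [h.as_sum, map_sum]
  simp only [aeval_chart_monomial, coeff_sum, coeff_monomial]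
  rw [Finset.sum_eq_single m]
  · simp
  · intro m' hm' hne
    rw [if_neg]
    intro he
    have hm'd : m'.degree = d := (hh.degree_eq_sum_deg_support hm').symm
    have h0 := congrArg (· 0) he
    have h1 := congrArg (· 1) he
    simp only [affineExponent_apply_zero, affineExponent_apply_one] at h0 h1
    rw [Finsupp.degree_eq_sum, Fin.sum_univ_three] at hm hm'd
    have h2 : m' 2 = m 2 := by omega
    exact hne (Finsupp.ext fun i => by fin_cases i; exacts [h0, h1, h2])
  · simp +contextual

theorem le_or_le_of_mul_aeval_chart_mem_span [NoZeroDivisors R] {d k : ℕ}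
    {h : MvPolynomial (Fin 3) R} (hh : h.IsHomogeneous d) {s : MvPolynomial (Fin 2) R}
    (hs : eval ![0, 0] s ≠ 0)
    (hsp : s * aeval ![X 0, X 1, 1] h ∈
      Ideal.span {(X 0 : MvPolynomial (Fin 2) R) ^ k, X 1 ^ k})
    {m : Fin 3 →₀ ℕ} (hm : m ∈ h.support) : k ≤ m 0 ∨ k ≤ m 1 := by
  by_contra! hlt
  have hs0 : constantCoeff s ≠ 0 := by
    rwa [show (![0, 0] : Fin 2 → R) = 0 from by ext i; fin_cases i <;> rfl, eval_zero] at hs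
  have := coeff_eq_zero_of_mul_mem_span_X_pow_pair hs0 hsp (affineExponent m)
    (by simpa using hlt.1) (by simpa using hlt.2)
  rw [coeff_aeval_chart_of_isHomogeneous hh (hh.degree_eq_sum_deg_support hm).symm] at this
  exact mem_support_iff.mp hm this

theorem le_or_le_of_mul_aeval_chart_perm_mem_span [NoZeroDivisors R] {d k : ℕ}
    {h : MvPolynomial (Fin 3) R} (hh : h.IsHomogeneous d) (σ : Equiv.Perm (Fin 3))
    {s : MvPolynomial (Fin 2) R} (hs : eval ![0, 0] s ≠ 0)
    (hsp : s * aeval (![X 0, X 1, 1] ∘ σ) h ∈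
      Ideal.span {(X 0 : MvPolynomial (Fin 2) R) ^ k, X 1 ^ k})
    {m : Fin 3 →₀ ℕ} (hm : m ∈ h.support) : k ≤ m (σ.symm 0) ∨ k ≤ m (σ.symm 1) := by
  rw [← aeval_rename] at hsp
  have hm' : m.mapDomain σ ∈ (rename σ h).support := by
    rwa [mem_support_iff, coeff_rename_mapDomain σ σ.injective, ← mem_support_iff]
  simpa [Finsupp.mapDomain_equiv_apply] using
    le_or_le_of_mul_aeval_chart_mem_span hh.rename_isHomogeneous hs hsp hm'

end

/-- For `f = x^j y^j + y^j z^j + x^j z^j` with `j ≥ 3`: any homogeneous polynomial `h` of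
degree `2j - 3` whose localization at each of the three singular points lies in the local
ideal generated by the `(j-1)`-st powers of the two local coordinates must vanish;
consequently `I_{f, 2j-3} = 0` for the saturation `I_f` of the Jacobian ideal. -/
theorem stmt16 (j : ℕ) (hj : 3 ≤ j)
    (h : MvPolynomial (Fin 3) ℂ)
    (hhom : h.IsHomogeneous (2 * j - 3))
    -- localization condition at (0:0:1), chart z = 1, local coordinates (x, y)
    (h₁ : ∃ s : MvPolynomial (Fin 2) ℂ, eval ![0, 0] s ≠ 0 ∧
      s * (aeval ![X 0, X 1, 1] h) ∈
        Ideal.span {(X 0 : MvPolynomial (Fin 2) ℂ) ^ (j - 1), X 1 ^ (j - 1)})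
    -- localization condition at (0:1:0), chart y = 1, local coordinates (x, z)
    (h₂ : ∃ s : MvPolynomial (Fin 2) ℂ, eval ![0, 0] s ≠ 0 ∧
      s * (aeval ![X 0, 1, X 1] h) ∈
        Ideal.span {(X 0 : MvPolynomial (Fin 2) ℂ) ^ (j - 1), X 1 ^ (j - 1)})
    -- localization condition at (1:0:0), chart x = 1, local coordinates (y, z)
    (h₃ : ∃ s : MvPolynomial (Fin 2) ℂ, eval ![0, 0] s ≠ 0 ∧
      s * (aeval ![1, X 0, X 1] h) ∈
        Ideal.span {(X 0 : MvPolynomial (Fin 2) ℂ) ^ (j - 1), X 1 ^ (j - 1)}) :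
    h = 0 := by
  obtain ⟨s₁, hs₁, hz⟩ := h₁
  obtain ⟨s₂, hs₂, hy⟩ := h₂
  obtain ⟨s₃, hs₃, hx⟩ := h₃
  rw [show (![X 0, 1, X 1] : Fin 3 → MvPolynomial (Fin 2) ℂ) =
      ![X 0, X 1, 1] ∘ Equiv.swap (1 : Fin 3) 2 from by ext i : 1; fin_cases i <;> rfl] at hy
  rw [show (![1, X 0, X 1] : Fin 3 → MvPolynomial (Fin 2) ℂ) =
      ![X 0, X 1, 1] ∘ (finRotate 3).symm from by ext i : 1; fin_cases i <;> rfl] at hx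
  rw [← support_eq_empty, Finset.eq_empty_iff_forall_notMem]
  intro m hm
  have hdeg := hhom.degree_eq_sum_deg_support hm
  rw [← Finsupp.degree_apply, Finsupp.degree_eq_sum, Fin.sum_univ_three] at hdeg
  have bz := le_or_le_of_mul_aeval_chart_mem_span hhom hs₁ hz hm
  have by' : j - 1 ≤ m 0 ∨ j - 1 ≤ m 2 :=
    le_or_le_of_mul_aeval_chart_perm_mem_span hhom _ hs₂ hy hm
  have bx : j - 1 ≤ m 1 ∨ j - 1 ≤ m 2 :=
    le_or_le_of_mul_aeval_chart_perm_mem_span hhom _ hs₃ hx hm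
  omega
end
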